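/- Let q ∈ (1/2, 1), ε ∈ (0,1), and let n_ε be the least integer n with q^n / (½(1 + (2q−1)^n)) ≤ ε. Then log ε / log q + 1 ≤ n_ε ≤ log ε / log q + log(1/2)/log q + 1. Consequently n_ε / (log ε / log q) → 1 as ε → 0. Similarly, if q ∈ (0, 1/2), then log ε / log q ≤ n_ε ≤ log ε / log q + 2. -/
import Mathlib


open Filter

noncomputable section

/-- x_n = q^n / (½(1 + (2q−1)^n)): the type-I error probability of the optimal
ℤ₂-invariant POVM (whose type-II error is 0) for testing ρ₀ = |0⟩⟨0| against
ρ₁ = |ψ₁⟩⟨ψ₁|, |ψ₁⟩ = √q|0⟩ + √(1−q)|1⟩, on n copies. -/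
def xSeq (q : ℝ) (n : ℕ) : ℝ := q ^ n / ((1 + (2 * q - 1) ^ n) / 2)

/-- n_ε: the least number of copies n with x_n ≤ ε. -/
def nCrit (q ε : ℝ) : ℕ := sInf {n : ℕ | xSeq q n ≤ ε}

/-- From q^k ≤ ε conclude log ε / log q ≤ k. -/
lemma log_div_le_of_pow_le {q ε : ℝ} (hq0 : 0 < q) (hq1 : q < 1) (_hε : 0 < ε)
    {k : ℕ} (h : q ^ k ≤ ε) : Real.log ε / Real.log q ≤ (k : ℝ) := by
  have hlq : Real.log q < 0 := Real.log_neg hq0 hq1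
  have h1 : (k : ℝ) * Real.log q ≤ Real.log ε := by
    have := Real.log_le_log (pow_pos hq0 k) h
    rwa [Real.log_pow] at this
  rw [div_le_iff_of_neg hlq]
  linarith [h1]

/-- From ε < q^k conclude k < log ε / log q. -/
lemma lt_log_div_of_lt_pow {q ε : ℝ} (hq0 : 0 < q) (hq1 : q < 1) (hε : 0 < ε)
    {k : ℕ} (h : ε < q ^ k) : (k : ℝ) < Real.log ε / Real.log q := by
  have hlq : Real.log q < 0 := Real.log_neg hq0 hq1
  have h1 : Real.log ε < (k : ℝ) * Real.log q := by
    have := Real.log_lt_log hε h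
    rwa [Real.log_pow] at this
  rw [lt_div_iff_of_neg hlq]
  linarith [h1]

/-- Case q ∈ (1/2, 1): lower bound q^n ≤ x_{n+1}. -/
lemma case1_lb {q : ℝ} (hq2 : 1 / 2 < q) (hq1 : q < 1) (n : ℕ) :
    q ^ n ≤ xSeq q (n + 1) := by
  have h0 : (0:ℝ) ≤ 2 * q - 1 := by linarith
  have h1 : 2 * q - 1 ≤ 1 := by linarith
  have hd : (2 * q - 1) ^ (n + 1) ≤ 2 * q - 1 := by
    have := pow_le_pow_of_le_one h0 h1 (show 1 ≤ n + 1 by omega)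
    simpa using this
  have hdnn : (0:ℝ) ≤ (2 * q - 1) ^ (n + 1) := pow_nonneg h0 _
  have hdpos : (0:ℝ) < (1 + (2 * q - 1) ^ (n + 1)) / 2 := by linarith
  rw [xSeq, le_div_iff₀ hdpos]
  have hqn : (0:ℝ) ≤ q ^ n := pow_nonneg (by linarith) n
  have hdq : (1 + (2 * q - 1) ^ (n + 1)) / 2 ≤ q := by linarith
  calc q ^ n * ((1 + (2 * q - 1) ^ (n + 1)) / 2) ≤ q ^ n * q :=
        mul_le_mul_of_nonneg_left hdq hqn
    _ = q ^ (n + 1) := (pow_succ q n).symm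

/-- Case q ∈ (1/2, 1): upper bound x_n ≤ 2 q^n. -/
lemma case1_ub {q : ℝ} (hq2 : 1 / 2 < q) (n : ℕ) :
    xSeq q n ≤ 2 * q ^ n := by
  have h0 : (0:ℝ) ≤ (2 * q - 1) ^ n := pow_nonneg (by linarith) n
  have hdpos : (0:ℝ) < (1 + (2 * q - 1) ^ n) / 2 := by linarith
  rw [xSeq, div_le_iff₀ hdpos]
  have hqn : (0:ℝ) ≤ q ^ n := pow_nonneg (by linarith) n
  nlinarith [mul_nonneg hqn h0]

/-- Case q ∈ (0, 1/2): bounds on (2q-1)^(n+1). -/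
lemma case2_pow {q : ℝ} (hq0 : 0 < q) (hq2 : q < 1 / 2) (n : ℕ) :
    2 * q - 1 ≤ (2 * q - 1) ^ (n + 1) ∧ (2 * q - 1) ^ (n + 1) ≤ 1 - 2 * q := by
  have habs : |2 * q - 1| = 1 - 2 * q := by
    rw [abs_of_nonpos (by linarith)]; ring
  have h := pow_le_pow_of_le_one (show (0:ℝ) ≤ 1 - 2 * q by linarith)
    (show (1:ℝ) - 2 * q ≤ 1 by linarith) (show 1 ≤ n + 1 by omega)
  rw [pow_one] at h
  have habs2 : |(2 * q - 1) ^ (n + 1)| ≤ 1 - 2 * q := by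
    calc |(2 * q - 1) ^ (n + 1)| = (1 - 2 * q) ^ (n + 1) := by rw [abs_pow, habs]
      _ ≤ 1 - 2 * q := h
  obtain ⟨hl, hr⟩ := abs_le.mp habs2
  exact ⟨by linarith, hr⟩

/-- Case q ∈ (0, 1/2): bounds on the denominator. -/
lemma case2_den {q : ℝ} (hq0 : 0 < q) (hq2 : q < 1 / 2) (n : ℕ) :
    q ≤ (1 + (2 * q - 1) ^ (n + 1)) / 2 ∧ (1 + (2 * q - 1) ^ (n + 1)) / 2 ≤ 1 := by
  obtain ⟨hl, hr⟩ := case2_pow hq0 hq2 n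
  constructor <;> linarith

/-- Case q ∈ (0, 1/2): lower bound q^n ≤ x_n. -/
lemma case2_lb {q : ℝ} (hq0 : 0 < q) (hq2 : q < 1 / 2) (n : ℕ) :
    q ^ n ≤ xSeq q n := by
  rcases n with _ | m
  · norm_num [xSeq]
  · obtain ⟨hdq, hd1⟩ := case2_den hq0 hq2 m
    have hdpos : (0:ℝ) < (1 + (2 * q - 1) ^ (m + 1)) / 2 := lt_of_lt_of_le hq0 hdq
    rw [xSeq, le_div_iff₀ hdpos]
    have hqn : (0:ℝ) ≤ q ^ (m + 1) := pow_nonneg hq0.le _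
    nlinarith [mul_le_mul_of_nonneg_left hd1 hqn]

/-- Case q ∈ (0, 1/2): upper bound x_{n+1} ≤ q^n. -/
lemma case2_ub {q : ℝ} (hq0 : 0 < q) (hq2 : q < 1 / 2) (n : ℕ) :
    xSeq q (n + 1) ≤ q ^ n := by
  obtain ⟨hdq, hd1⟩ := case2_den hq0 hq2 n
  have hdpos : (0:ℝ) < (1 + (2 * q - 1) ^ (n + 1)) / 2 := lt_of_lt_of_le hq0 hdq
  rw [xSeq, div_le_iff₀ hdpos]
  have hqn : (0:ℝ) ≤ q ^ n := pow_nonneg hq0.le n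
  calc q ^ (n + 1) = q ^ n * q := pow_succ q n
    _ ≤ q ^ n * ((1 + (2 * q - 1) ^ (n + 1)) / 2) := mul_le_mul_of_nonneg_left hdq hqn

/-- In both cases, x_{n+1} ≤ 2 q^n (used for nonemptiness). -/
lemma xSeq_succ_le {q : ℝ} (hq0 : 0 < q) (hq1 : q < 1) (hq : q ≠ 1 / 2)
    (n : ℕ) : xSeq q (n + 1) ≤ 2 * q ^ n := by
  rcases lt_or_gt_of_ne hq with h | h
  · calc xSeq q (n + 1) ≤ q ^ n := case2_ub hq0 h n
      _ ≤ 2 * q ^ n := by nlinarith [pow_nonneg hq0.le n]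
  · have hmono : q ^ (n + 1) ≤ q ^ n := by
      simpa using pow_le_pow_of_le_one hq0.le hq1.le (Nat.le_succ n)
    calc xSeq q (n + 1) ≤ 2 * q ^ (n + 1) := case1_ub h (n + 1)
      _ ≤ 2 * q ^ n := by linarith

lemma nCrit_facts {q ε : ℝ} (hq0 : 0 < q) (hq1 : q < 1) (hq : q ≠ 1 / 2)
    (hε0 : 0 < ε) (hε1 : ε < 1) :
    ∃ m : ℕ, nCrit q ε = m + 1 ∧ xSeq q (m + 1) ≤ ε ∧ ε < xSeq q m := by
  have htend : Tendsto (fun n : ℕ => 2 * q ^ n) atTop (nhds 0) := by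
    simpa using (tendsto_pow_atTop_nhds_zero_of_lt_one hq0.le hq1).const_mul 2
  obtain ⟨N, hN⟩ := (htend.eventually (gt_mem_nhds hε0)).exists
  have hne : {n : ℕ | xSeq q n ≤ ε}.Nonempty :=
    ⟨N + 1, le_trans (xSeq_succ_le hq0 hq1 hq N) hN.le⟩
  have hmem : xSeq q (nCrit q ε) ≤ ε := Nat.sInf_mem hne
  have hx0 : xSeq q 0 = 1 := by norm_num [xSeq]
  have hpos : nCrit q ε ≠ 0 := by
    intro h0
    rw [h0, hx0] at hmem
    linarith
  obtain ⟨m, hm⟩ : ∃ m, nCrit q ε = m + 1 := ⟨nCrit q ε - 1, by omega⟩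
  refine ⟨m, hm, by rw [hm] at hmem; exact hmem, ?_⟩
  have hlt : m < nCrit q ε := by omega
  have := Nat.notMem_of_lt_sInf (s := {n : ℕ | xSeq q n ≤ ε}) hlt
  simpa [Set.mem_setOf_eq, not_le] using this

/-- The bounds for q ∈ (1/2, 1). -/
lemma case1_bounds {q : ℝ} (hq2 : 1 / 2 < q) (hq1 : q < 1) :
    ∀ ε ∈ Set.Ioo (0 : ℝ) 1,
      Real.log ε / Real.log q + 1 ≤ (nCrit q ε : ℝ) ∧
      (nCrit q ε : ℝ) ≤ Real.log ε / Real.log q + Real.log (1 / 2) / Real.log q + 1 := by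
  rintro ε ⟨hε0, hε1⟩
  have hq0 : 0 < q := by linarith
  obtain ⟨m, hm, hle, hgt⟩ := nCrit_facts hq0 hq1 (by linarith) hε0 hε1
  rw [hm]
  constructor
  · have h1 : q ^ m ≤ ε := le_trans (case1_lb hq2 hq1 m) hle
    have h2 := log_div_le_of_pow_le hq0 hq1 hε0 h1
    push_cast
    linarith
  · have h1 : ε / 2 < q ^ m := by
      have := case1_ub hq2 m
      linarith
    have h2 : (0:ℝ) < ε / 2 := by linarith
    have h3 := lt_log_div_of_lt_pow hq0 hq1 h2 h1
    have h4 : Real.log (ε / 2) = Real.log ε + Real.log (1 / 2) := by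
      rw [Real.log_div hε0.ne' two_ne_zero, Real.log_div one_ne_zero two_ne_zero,
        Real.log_one]
      ring
    rw [h4, add_div] at h3
    push_cast
    linarith

/-- For q ∈ (1/2, 1) and ε ∈ (0,1):
log ε / log q + 1 ≤ n_ε ≤ log ε / log q + log(1/2)/log q + 1, hence
n_ε / (log ε / log q) → 1 as ε → 0⁺; and for q ∈ (0, 1/2):
log ε / log q ≤ n_ε ≤ log ε / log q + 2. -/
theorem critical_copies_bounds (q : ℝ) :
    (q ∈ Set.Ioo (1 / 2 : ℝ) 1 →
      (∀ ε ∈ Set.Ioo (0 : ℝ) 1,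
        Real.log ε / Real.log q + 1 ≤ (nCrit q ε : ℝ) ∧
        (nCrit q ε : ℝ) ≤ Real.log ε / Real.log q + Real.log (1 / 2) / Real.log q + 1) ∧
      Tendsto (fun ε : ℝ => (nCrit q ε : ℝ) / (Real.log ε / Real.log q))
        (nhdsWithin 0 (Set.Ioi 0)) (nhds 1)) ∧
    (q ∈ Set.Ioo (0 : ℝ) (1 / 2) →
      ∀ ε ∈ Set.Ioo (0 : ℝ) 1,
        Real.log ε / Real.log q ≤ (nCrit q ε : ℝ) ∧
        (nCrit q ε : ℝ) ≤ Real.log ε / Real.log q + 2) := by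
  constructor
  · rintro ⟨hq2, hq1⟩
    have hq0 : 0 < q := by linarith
    have hlq : Real.log q < 0 := Real.log_neg hq0 hq1
    have hnq : Real.log q ≠ 0 := hlq.ne
    refine ⟨case1_bounds hq2 hq1, ?_⟩
    have hinv : Tendsto (fun ε : ℝ => Real.log q / Real.log ε)
        (nhdsWithin 0 (Set.Ioi 0)) (nhds 0) := by
      have h1 : Tendsto (fun ε : ℝ => -Real.log ε) (nhdsWithin 0 (Set.Ioi 0)) atTop :=
        tendsto_neg_atBot_atTop.comp Real.tendsto_log_nhdsGT_zero
      have h2 := h1.inv_tendsto_atTop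
      have h3 : Tendsto (fun ε : ℝ => (Real.log ε)⁻¹) (nhdsWithin 0 (Set.Ioi 0)) (nhds 0) := by
        have h4 := h2.neg
        simp only [neg_zero] at h4
        convert h4 using 1
        funext ε
        simp [Pi.inv_apply, inv_neg]
      simpa [div_eq_mul_inv] using h3.const_mul (Real.log q)
    set C : ℝ := Real.log (1 / 2) / Real.log q + 1 with hC
    have hg : Tendsto (fun ε : ℝ => 1 + Real.log q / Real.log ε)
        (nhdsWithin 0 (Set.Ioi 0)) (nhds 1) := by
      have := hinv.const_add 1
      simpa using this
    have hh : Tendsto (fun ε : ℝ => 1 + C * (Real.log q / Real.log ε))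
        (nhdsWithin 0 (Set.Ioi 0)) (nhds 1) := by
      have := (hinv.const_mul C).const_add 1
      simpa using this
    have hev : Set.Ioo (0:ℝ) 1 ∈ nhdsWithin (0:ℝ) (Set.Ioi 0) :=
      Ioo_mem_nhdsGT_of_mem ⟨le_refl 0, one_pos⟩
    refine tendsto_of_tendsto_of_tendsto_of_le_of_le' hg hh ?_ ?_
    · filter_upwards [hev] with ε hε
      obtain ⟨hlow, _⟩ := case1_bounds hq2 hq1 ε hε
      have hlε : Real.log ε < 0 := Real.log_neg hε.1 hε.2
      have hne : Real.log ε ≠ 0 := hlε.ne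
      have hL : 0 < Real.log ε / Real.log q := div_pos_of_neg_of_neg hlε hlq
      have key : 1 + Real.log q / Real.log ε =
          (Real.log ε / Real.log q + 1) / (Real.log ε / Real.log q) := by
        field_simp
      rw [key]
      exact (div_le_div_iff_of_pos_right hL).mpr hlow
    · filter_upwards [hev] with ε hε
      obtain ⟨_, hup⟩ := case1_bounds hq2 hq1 ε hε
      have hlε : Real.log ε < 0 := Real.log_neg hε.1 hε.2
      have hne : Real.log ε ≠ 0 := hlε.ne
      have hL : 0 < Real.log ε / Real.log q := div_pos_of_neg_of_neg hlε hlq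
      have key : 1 + C * (Real.log q / Real.log ε) =
          (Real.log ε / Real.log q + C) / (Real.log ε / Real.log q) := by
        field_simp
      rw [key]
      have hup' : (nCrit q ε : ℝ) ≤ Real.log ε / Real.log q + C := by
        rw [hC]; linarith
      exact (div_le_div_iff_of_pos_right hL).mpr hup'
  · rintro ⟨hq0, hq2⟩ ε ⟨hε0, hε1⟩
    have hq1 : q < 1 := by linarith
    have hlq : Real.log q < 0 := Real.log_neg hq0 hq1
    obtain ⟨m, hm, hle, hgt⟩ := nCrit_facts hq0 hq1 (by linarith) hε0 hε1
    rw [hm]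
    constructor
    · have h1 : q ^ (m + 1) ≤ ε := le_trans (case2_lb hq0 hq2 (m + 1)) hle
      have h2 := log_div_le_of_pow_le hq0 hq1 hε0 h1
      push_cast at h2 ⊢
      linarith
    · have hlε : Real.log ε < 0 := Real.log_neg hε0 hε1
      have hL : 0 < Real.log ε / Real.log q := div_pos_of_neg_of_neg hlε hlq
      rcases m with _ | m'
      · push_cast
        linarith
      · have h1 : ε < q ^ m' := lt_of_lt_of_le hgt (case2_ub hq0 hq2 m')
        have h2 := lt_log_div_of_lt_pow hq0 hq1 hε0 h1
        push_cast at h2 ⊢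
        linarith
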